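/- arXiv:2201.01642 — 4 statements merged into one kernel-verified Lean document; each statement's English description precedes it below -/
import Mathlib

section
/- Let ν denote the 5-adic valuation on integers (with ν(0) = ∞). Suppose (α_{i,j})_{i,j≥1} is a family of integers such that ν(α_{i,j}) ≥ ⌊(5j-i-1)/6⌋ for all 1 ≤ i ≤ 5 and all j ≥ 1, and such that for all i ≥ 6 and j ≥ 1, α_{i,j} is an integer linear combination α_{i,j} = Σ_{r=1}^{5} Σ_{s=1}^{5} c_{r,s} α_{i-r, j-s} where each coefficient c_{r,s} is an integer with ν(c_{r,s}) ≥ e_{r,s}, the exponents e_{r,s} being given by the 5×5 matrix with rows (1,2,3,4,4), (1,2,4,3,4), (1,3,2,3,4), (1,1,2,3,4), (0,1,2,3,4) (and α_{i',j'} = 0 when j' ≤ 0). Then ν(α_{i,j}) ≥ ⌊(5j-i-1)/6⌋ for all i, j ≥ 1. -/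
/-- The matrix of valuation exponents for the recurrence coefficients. -/
theorem alpha_valuation_bound
    (α : ℤ → ℤ → ℤ) (c : Fin 5 → Fin 5 → ℤ)
    (hzero : ∀ i j : ℤ, j ≤ 0 → α i j = 0)
    (hbase : ∀ i j : ℤ, 1 ≤ i → i ≤ 5 → 1 ≤ j →
      (5 : ℤ) ^ ((5 * j - i - 1) / 6).toNat ∣ α i j)
    (hc : ∀ r s : Fin 5,
      (5 : ℤ) ^ ((!![1,2,3,4,4; 1,2,4,3,4; 1,3,2,3,4; 1,1,2,3,4; 0,1,2,3,4] :
        Matrix (Fin 5) (Fin 5) ℕ) r s) ∣ c r s)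
    (hrec : ∀ i j : ℤ, 6 ≤ i → 1 ≤ j →
      α i j = ∑ r : Fin 5, ∑ s : Fin 5,
        c r s * α (i - ((r : ℤ) + 1)) (j - ((s : ℤ) + 1))) :
    ∀ i j : ℤ, 1 ≤ i → 1 ≤ j → (5 : ℤ) ^ ((5 * j - i - 1) / 6).toNat ∣ α i j := by
  set M : Matrix (Fin 5) (Fin 5) ℕ :=
    !![1,2,3,4,4; 1,2,4,3,4; 1,3,2,3,4; 1,1,2,3,4; 0,1,2,3,4] with hMdef
  have hM : ∀ r s : Fin 5, 5 * ((s : ℕ) + 1) ≤ 6 * M r s + ((r : ℕ) + 1) := by decide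
  have key : ∀ n : ℕ, ∀ i j : ℤ, i.toNat ≤ n → 1 ≤ i → 1 ≤ j →
      (5 : ℤ) ^ ((5 * j - i - 1) / 6).toNat ∣ α i j := by
    intro n
    induction n with
    | zero => intro i j h h1 _; omega
    | succ n ih =>
      intro i j hn h1 hj
      rcases le_or_gt i 5 with h5 | h5
      · exact hbase i j h1 h5 hj
      · have hi6 : 6 ≤ i := by omega
        rw [hrec i j hi6 hj]
        refine Finset.dvd_sum fun r _ => Finset.dvd_sum fun s _ => ?_
        have hr5 : (r : ℕ) < 5 := r.isLt
        have hs5 : (s : ℕ) < 5 := s.isLt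
        rcases le_or_gt (j - ((s : ℤ) + 1)) 0 with hj' | hj'
        · rw [hzero _ _ hj', mul_zero]
          exact dvd_zero _
        · have hi' : 1 ≤ i - ((r : ℤ) + 1) := by omega
          have hb := ih (i - ((r : ℤ) + 1)) (j - ((s : ℤ) + 1)) (by omega) hi' hj'
          have hc' := hc r s
          have hle : ((5 * j - i - 1) / 6).toNat ≤
              M r s + ((5 * (j - ((s : ℤ) + 1)) - (i - ((r : ℤ) + 1)) - 1) / 6).toNat := by
            have := hM r s; omega
          refine dvd_trans (pow_dvd_pow 5 hle) ?_
          rw [pow_add]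
          exact mul_dvd_mul hc' hb
  intro i j h1 hj
  exact key i.toNat i j le_rfl h1 hj
end

section
/- Let ν be the 5-adic valuation (ν(0)=∞) and let (α_{i,j}) be integers with ν(α_{i,j}) ≥ ⌊(5j-i-1)/6⌋ for all i,j ≥ 1 and α_{1,j} = 0 for j ≥ 2. Define vectors x^{(m)} = (x_{m,1}, x_{m,2}, …) of integers recursively by x_{m+1,j} = Σ_{i≥1} x_{m,i} α_{i,j} (finite sums). If ν(x_{m,i}) ≥ m + ⌊(5i-10)/6⌋ for all i ≥ 2, and ν(x_{m,1}) = 0, then for all i ≥ 4, ν(x_{m+1,i}) ≥ m + 1 + ⌊(5i-10)/6⌋. -/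
theorem x_valuation_step
    (α : ℕ → ℕ → ℤ) (x y : ℕ → ℤ) (m N : ℕ)
    (hα : ∀ i j : ℕ, 1 ≤ i → 1 ≤ j →
      (5 : ℤ) ^ ((5 * (j : ℤ) - i - 1) / 6).toNat ∣ α i j)
    (hα1 : ∀ j : ℕ, 2 ≤ j → α 1 j = 0)
    (hy : ∀ j : ℕ, y j = ∑ i ∈ Finset.Icc 1 N, x i * α i j)
    (hx1 : ¬ (5 : ℤ) ∣ x 1)
    (hx : ∀ i : ℕ, 2 ≤ i →
      (5 : ℤ) ^ (m + ((5 * (i : ℤ) - 10) / 6).toNat) ∣ x i) :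
    ∀ i : ℕ, 4 ≤ i →
      (5 : ℤ) ^ (m + 1 + ((5 * (i : ℤ) - 10) / 6).toNat) ∣ y i := by
  intro j hj
  rw [hy j]
  apply Finset.dvd_sum
  intro i hi
  simp only [Finset.mem_Icc] at hi
  rcases eq_or_lt_of_le hi.1 with h1 | h2
  · subst h1; rw [hα1 j (by omega)]
    simp
  · have hi2 : 2 ≤ i := h2
    have key : m + 1 + ((5 * (j : ℤ) - 10) / 6).toNat ≤
        (m + ((5 * (i : ℤ) - 10) / 6).toNat) + ((5 * (j : ℤ) - i - 1) / 6).toNat := by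
      have hi' : (2 : ℤ) ≤ i := by exact_mod_cast hi2
      have hj' : (4 : ℤ) ≤ j := by exact_mod_cast hj
      omega
    calc (5 : ℤ) ^ (m + 1 + ((5 * (j : ℤ) - 10) / 6).toNat)
        ∣ (5 : ℤ) ^ ((m + ((5 * (i : ℤ) - 10) / 6).toNat) + ((5 * (j : ℤ) - i - 1) / 6).toNat) :=
          pow_dvd_pow 5 key
      _ = (5 : ℤ) ^ (m + ((5 * (i : ℤ) - 10) / 6).toNat) * 5 ^ ((5 * (j : ℤ) - i - 1) / 6).toNat := pow_add 5 _ _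
      _ ∣ x i * α i j := mul_dvd_mul (hx i hi2) (hα i j (by omega) (by omega))
end

section
/- Let ν be the 5-adic valuation. Fix m ≥ 1 and suppose: (i) integers x_k (k ≥ 1) satisfy ν(x_1) = 0 and ν(x_k) ≥ 2m−1+⌊(5k−10)/6⌋ for k ≥ 2; (ii) integers α_{k,2} satisfy α_{1,2} = 0 and ν(α_{k,2}) ≥ ⌊(9−k)/6⌋ for k ≥ 2. Then the (finite) sum y = Σ_{k≥1} x_k α_{k,2} satisfies ν(y) ≥ 2m. -/
theorem case_II_valuation (m N : ℕ) (hm : 1 ≤ m)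
    (x α₂ : ℕ → ℤ)
    (hx1 : ¬ (5 : ℤ) ∣ x 1)
    (hx : ∀ k : ℕ, 2 ≤ k →
      (5 : ℤ) ^ (2 * m - 1 + ((5 * (k : ℤ) - 10) / 6).toNat) ∣ x k)
    (hα1 : α₂ 1 = 0)
    (hα : ∀ k : ℕ, 2 ≤ k → (5 : ℤ) ^ (((9 - (k : ℤ)) / 6).toNat) ∣ α₂ k) :
    (5 : ℤ) ^ (2 * m) ∣ ∑ k ∈ Finset.Icc 1 N, x k * α₂ k := by
  apply Finset.dvd_sum
  intro k hk
  rcases Finset.mem_Icc.mp hk with ⟨hk1, _⟩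
  rcases eq_or_lt_of_le hk1 with h1 | h2
  · rw [← h1, hα1, mul_zero]
    exact dvd_zero _
  · have hk2 : 2 ≤ k := h2
    have hd := mul_dvd_mul (hx k hk2) (hα k hk2)
    rw [← pow_add] at hd
    refine dvd_trans (pow_dvd_pow 5 ?_) hd
    set t := ((5 * (k : ℤ) - 10) / 6).toNat with ht
    set b := ((9 - (k : ℤ)) / 6).toNat with hb
    have h1tb : 1 ≤ t + b := by
      rcases le_or_gt k 3 with h3 | h4
      · have : (1 : ℤ) ≤ (9 - (k : ℤ)) / 6 := by
          have : (k : ℤ) ≤ 3 := by exact_mod_cast h3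
          omega
        have : 1 ≤ b := by
          rw [hb]; omega
        omega
      · have hk4 : (4 : ℤ) ≤ (k : ℤ) := by exact_mod_cast h4
        have : (1 : ℤ) ≤ (5 * (k : ℤ) - 10) / 6 := by omega
        have : 1 ≤ t := by rw [ht]; omega
        omega
    omega
end

section
/- Let F(x,y) = N(x,y)/D(x,y) be the rational function with N(x,y) = −yx + (y+210y²+4300y³+34000y⁴+120000y⁵+160000y⁶)x² + (y+180y²+3575y³+27500y⁴+94000y⁵+120000y⁶)x³ + (50y²+1000y³+7450y⁴+24500y⁵+30000y⁶)x⁴ + (5y²+95y³+675y⁴+2125y⁵+2500y⁶)x⁵ and D(x,y) = 1 − (205y+4300y²+34000y³+120000y⁴+160000y⁵)x − (215y+4475y²+35000y³+122000y⁴+160000y⁵)x² − (85y+1750y²+13525y³+46500y⁴+60000y⁵)x³ − (15y+305y²+2325y³+7875y⁴+10000y⁵)x⁴ − (y+20y²+150y³+500y⁴+625y⁵)x⁵, viewed as a formal power series in x and y over ℚ. Then every coefficient α_{i,j} of x^i y^j in F is an integer, and α_{1,1} = −1 while α_{1,j} = 0 for all j ≥ 2. -/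
/-!
The denominator `D` has constant term `1`, so it is already a unit in `ℤ⟦x, y⟧` and `F = N / D`
is the image of an integral power series. For the row `α_{1,·}` work modulo `x²`: since
`D ≡ 1 [mod x]` and `x ∣ N`, also `x ∣ F`, hence `F ≡ F * D = N ≡ -x y [mod x²]`.
-/

open MvPowerSeries

theorem exists_apply_eq_of_mul_apply_eq {A B Φ : Type*} [Monoid A] [Monoid B] [FunLike Φ A B]
    [MonoidHomClass Φ A B] (φ : Φ) {D N : A} (hD : IsUnit D) {F : B} (h : F * φ D = φ N) :
    ∃ G, φ G = F := by
  obtain ⟨u, rfl⟩ := hD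
  refine ⟨N * ↑u⁻¹, ?_⟩
  rw [map_mul, ← h, mul_assoc, ← map_mul, Units.mul_inv, map_one, mul_one]

theorem sq_dvd_sub_of_mul_eq {R : Type*} [CommRing R] {x D F N : R} (hD : x ∣ D - 1)
    (hN : x ∣ N) (h : F * D = N) : x ^ 2 ∣ F - N := by
  have hF : x ∣ F := by
    rw [show F = N - F * (D - 1) by rw [← h]; ring]
    exact dvd_sub hN (hD.mul_left F)
  rw [show F - N = -(F * (D - 1)) by rw [← h]; ring, pow_two, dvd_neg]
  exact mul_dvd_mul hF hD

theorem MvPowerSeries.coeff_single_one_add_of_X_sq_dvd {σ R : Type*} [CommRing R] {s : σ}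
    {F c : MvPowerSeries σ R} (h : X s ^ 2 ∣ F - c * X s) {m : σ →₀ ℕ} (hm : m s = 0) :
    coeff (Finsupp.single s 1 + m) F = coeff m c := by
  classical
  rw [add_comm]
  have hzero := X_pow_dvd_iff.1 h (m + Finsupp.single s 1) (by simp [hm])
  rwa [map_sub, sub_eq_zero, X, coeff_add_mul_monomial, mul_one] at hzero

namespace AlphaMatrix

-- The paper's `D` and `N_α`, over any coefficient ring so that the integral ones map
-- to the rational ones.
variable (R : Type*) [CommRing R]

noncomputable def den : MvPowerSeries (Fin 2) R :=
  1 - (205 * X 1 + 4300 * X 1 ^ 2 + 34000 * X 1 ^ 3 + 120000 * X 1 ^ 4 +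
          160000 * X 1 ^ 5) * X 0
    - (215 * X 1 + 4475 * X 1 ^ 2 + 35000 * X 1 ^ 3 + 122000 * X 1 ^ 4 +
          160000 * X 1 ^ 5) * X 0 ^ 2
    - (85 * X 1 + 1750 * X 1 ^ 2 + 13525 * X 1 ^ 3 + 46500 * X 1 ^ 4 +
          60000 * X 1 ^ 5) * X 0 ^ 3
    - (15 * X 1 + 305 * X 1 ^ 2 + 2325 * X 1 ^ 3 + 7875 * X 1 ^ 4 +
          10000 * X 1 ^ 5) * X 0 ^ 4
    - (X 1 + 20 * X 1 ^ 2 + 150 * X 1 ^ 3 + 500 * X 1 ^ 4 + 625 * X 1 ^ 5) * X 0 ^ 5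

noncomputable def num : MvPowerSeries (Fin 2) R :=
  - X 1 * X 0
    + (X 1 + 210 * X 1 ^ 2 + 4300 * X 1 ^ 3 + 34000 * X 1 ^ 4 + 120000 * X 1 ^ 5 +
        160000 * X 1 ^ 6) * X 0 ^ 2
    + (X 1 + 180 * X 1 ^ 2 + 3575 * X 1 ^ 3 + 27500 * X 1 ^ 4 + 94000 * X 1 ^ 5 +
        120000 * X 1 ^ 6) * X 0 ^ 3
    + (50 * X 1 ^ 2 + 1000 * X 1 ^ 3 + 7450 * X 1 ^ 4 + 24500 * X 1 ^ 5 +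
        30000 * X 1 ^ 6) * X 0 ^ 4
    + (5 * X 1 ^ 2 + 95 * X 1 ^ 3 + 675 * X 1 ^ 4 + 2125 * X 1 ^ 5 +
        2500 * X 1 ^ 6) * X 0 ^ 5

theorem isUnit_den : IsUnit (den R) := by
  simp [isUnit_iff_constantCoeff, den]

theorem map_den {S : Type*} [CommRing S] (f : R →+* S) : map f (den R) = den S := by
  simp [den, map_ofNat]

theorem map_num {S : Type*} [CommRing S] (f : R →+* S) : map f (num R) = num S := by
  simp [num, map_ofNat]

theorem X_zero_dvd_den_sub_one : (X 0 : MvPowerSeries (Fin 2) R) ∣ den R - 1 := by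
  rw [← Ideal.mem_span_singleton, ← Ideal.Quotient.eq]
  simp [den, Ideal.Quotient.mk_singleton_self]

theorem X_zero_dvd_num : (X 0 : MvPowerSeries (Fin 2) R) ∣ num R := by
  rw [← Ideal.mem_span_singleton, ← Ideal.Quotient.eq_zero_iff_mem]
  simp [num, Ideal.Quotient.mk_singleton_self]

theorem X_zero_sq_dvd_num_sub : (X 0 : MvPowerSeries (Fin 2) R) ^ 2 ∣ num R - -X 1 * X 0 := by
  have hpow : ∀ k, 2 ≤ k →
      Ideal.Quotient.mk (Ideal.span {(X 0 : MvPowerSeries (Fin 2) R) ^ 2}) (X 0 ^ k) = 0 :=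
    fun k hk => (Ideal.Quotient.eq_zero_iff_dvd _ _).2 (pow_dvd_pow _ hk)
  rw [← Ideal.mem_span_singleton, ← Ideal.Quotient.eq]
  simp [num, hpow]

end AlphaMatrix

set_option maxHeartbeats 2000000 in

theorem alpha_matrix_first_row
    (F : MvPowerSeries (Fin 2) ℚ)
    (hF : F *
      (1 - (205 * X 1 + 4300 * X 1 ^ 2 + 34000 * X 1 ^ 3 + 120000 * X 1 ^ 4 +
              160000 * X 1 ^ 5) * X 0
         - (215 * X 1 + 4475 * X 1 ^ 2 + 35000 * X 1 ^ 3 + 122000 * X 1 ^ 4 +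
              160000 * X 1 ^ 5) * X 0 ^ 2
         - (85 * X 1 + 1750 * X 1 ^ 2 + 13525 * X 1 ^ 3 + 46500 * X 1 ^ 4 +
              60000 * X 1 ^ 5) * X 0 ^ 3
         - (15 * X 1 + 305 * X 1 ^ 2 + 2325 * X 1 ^ 3 + 7875 * X 1 ^ 4 +
              10000 * X 1 ^ 5) * X 0 ^ 4
         - (X 1 + 20 * X 1 ^ 2 + 150 * X 1 ^ 3 + 500 * X 1 ^ 4 + 625 * X 1 ^ 5) * X 0 ^ 5) =
      - X 1 * X 0
        + (X 1 + 210 * X 1 ^ 2 + 4300 * X 1 ^ 3 + 34000 * X 1 ^ 4 + 120000 * X 1 ^ 5 +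
            160000 * X 1 ^ 6) * X 0 ^ 2
        + (X 1 + 180 * X 1 ^ 2 + 3575 * X 1 ^ 3 + 27500 * X 1 ^ 4 + 94000 * X 1 ^ 5 +
            120000 * X 1 ^ 6) * X 0 ^ 3
        + (50 * X 1 ^ 2 + 1000 * X 1 ^ 3 + 7450 * X 1 ^ 4 + 24500 * X 1 ^ 5 +
            30000 * X 1 ^ 6) * X 0 ^ 4
        + (5 * X 1 ^ 2 + 95 * X 1 ^ 3 + 675 * X 1 ^ 4 + 2125 * X 1 ^ 5 +
            2500 * X 1 ^ 6) * X 0 ^ 5) :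
    (∀ i j : ℕ, ∃ z : ℤ,
      MvPowerSeries.coeff (Finsupp.single 0 i + Finsupp.single 1 j) F = (z : ℚ)) ∧
    MvPowerSeries.coeff (Finsupp.single 0 1 + Finsupp.single 1 1) F = -1 ∧
    (∀ j : ℕ, 2 ≤ j →
      MvPowerSeries.coeff (Finsupp.single 0 1 + Finsupp.single 1 j) F = 0) := by
  replace hF : F * AlphaMatrix.den ℚ = AlphaMatrix.num ℚ := hF
  obtain ⟨G, hG⟩ : ∃ G, map (Int.castRingHom ℚ) G = F :=
    exists_apply_eq_of_mul_apply_eq _ (AlphaMatrix.isUnit_den ℤ) (N := AlphaMatrix.num ℤ)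
      (by rwa [AlphaMatrix.map_den, AlphaMatrix.map_num])
  have hF_mod : X 0 ^ 2 ∣ F - -X 1 * X 0 := by
    have hF_num := sq_dvd_sub_of_mul_eq (AlphaMatrix.X_zero_dvd_den_sub_one ℚ)
      (AlphaMatrix.X_zero_dvd_num ℚ) hF
    simpa only [sub_add_sub_cancel] using dvd_add hF_num (AlphaMatrix.X_zero_sq_dvd_num_sub ℚ)
  have hrow (j : ℕ) :
      coeff (Finsupp.single 0 1 + Finsupp.single 1 j) F = if j = 1 then -1 else 0 := by
    rw [coeff_single_one_add_of_X_sq_dvd hF_mod (by simp), map_neg, coeff_X]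
    simp only [(Finsupp.single_injective _).eq_iff]
    split_ifs <;> simp
  refine ⟨fun i j => ⟨coeff (Finsupp.single 0 i + Finsupp.single 1 j) G, ?_⟩, by simp [hrow],
    fun j hj => by simp [hrow, show j ≠ 1 by omega]⟩
  rw [← hG, coeff_map, eq_intCast]
end
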